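/- In a rooted tree, if two trees on the same vertex set with the same root have identical LCA functions (i.e., for every pair of vertices (i,j), the least common ancestor of i and j is the same in both trees), then the two trees are equal (have the same parent function). -/

import Mathlib

/-- A rooted tree on a vertex set `V`: a root, a parent function fixing the
root, such that iterating the parent function from any vertex reaches the root. -/
structure RTree (V : Type) where
  root : V
  parent : V → V
  parent_root : parent root = root
  reaches_root : ∀ v : V, ∃ n : ℕ, parent^[n] v = root

/-- `a` is an ancestor of `v` (every vertex is an ancestor of itself). -/
def RTree.isAncestor {V : Type} (T : RTree V) (a v : V) : Prop :=
  ∃ n : ℕ, T.parent^[n] v = a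

/-- `a` is the least common ancestor of `u` and `v`: it is a common ancestor,
and every common ancestor of `u` and `v` is an ancestor of `a`. -/
def RTree.IsLCA {V : Type} (T : RTree V) (a u v : V) : Prop :=
  T.isAncestor a u ∧ T.isAncestor a v ∧
    ∀ b : V, T.isAncestor b u → T.isAncestor b v → T.isAncestor b a

/-!
The LCA function determines the ancestor relation, since `a` is an ancestor of `v` exactly
when `lca a v = a`. The ancestor relation in turn determines the parent function: the parent
of a non-root vertex `v` is the greatest strict ancestor of `v`, as every strict ancestor of `v`
is an ancestor of its parent.
-/

open Function

namespace RTree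

variable {V : Type} (T : RTree V)

theorem isAncestor_refl (v : V) : T.isAncestor v v := ⟨0, rfl⟩

theorem isAncestor_parent (v : V) : T.isAncestor (T.parent v) v := ⟨1, rfl⟩

variable {T}

theorem eq_root_of_isPeriodicPt {x : V} {k : ℕ} (hk : 0 < k) (hx : IsPeriodicPt T.parent k x) :
    x = T.root := by
  obtain ⟨N, hN⟩ := T.reaches_root x
  calc x = T.parent^[N * k] x := ((hx.const_mul N).eq).symm
    _ = T.parent^[N * k - N] (T.parent^[N] x) := by
      rw [← iterate_add_apply, Nat.sub_add_cancel (Nat.le_mul_of_pos_right N hk)]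
    _ = T.root := by rw [hN, iterate_fixed T.parent_root]

theorem isAncestor_antisymm {a b : V} (hab : T.isAncestor a b) (hba : T.isAncestor b a) :
    a = b := by
  obtain ⟨n, rfl⟩ := hab
  obtain ⟨m, hm⟩ := hba
  rcases n.eq_zero_or_pos with rfl | hn
  · rfl
  have hb : IsPeriodicPt T.parent (m + n) b := by
    rw [IsPeriodicPt, IsFixedPt, iterate_add_apply, hm]
  rw [eq_root_of_isPeriodicPt (by omega) hb, iterate_fixed T.parent_root]

theorem eq_of_isAncestor_of_parent_eq_self {a v : V} (hv : T.parent v = v)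
    (h : T.isAncestor a v) : a = v := by
  obtain ⟨n, rfl⟩ := h
  exact iterate_fixed hv n

theorem isAncestor_parent_of_isAncestor_of_ne {b v : V} (h : T.isAncestor b v) (hne : b ≠ v) :
    T.isAncestor b (T.parent v) := by
  obtain ⟨_ | n, rfl⟩ := h
  · exact absurd rfl hne
  · exact ⟨n, (iterate_succ_apply T.parent n v).symm⟩

theorem isAncestor_iff_lca_eq {lca : V → V → V} (h : ∀ u v : V, T.IsLCA (lca u v) u v)
    (a v : V) : T.isAncestor a v ↔ lca a v = a := by
  refine ⟨fun hav => ?_, fun he => he ▸ (h a v).2.1⟩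
  obtain ⟨hlca_a, -, hgreatest⟩ := h a v
  exact isAncestor_antisymm hlca_a (hgreatest a (T.isAncestor_refl a) hav)

theorem isAncestor_parent_parent_of_isAncestor_iff {T₁ T₂ : RTree V}
    (h : ∀ a v : V, T₁.isAncestor a v ↔ T₂.isAncestor a v) (v : V) :
    T₁.isAncestor (T₂.parent v) (T₁.parent v) := by
  by_cases h₂ : T₂.parent v = v
  · rw [h₂, eq_of_isAncestor_of_parent_eq_self h₂ ((h _ _).1 (T₁.isAncestor_parent v))]
    exact T₁.isAncestor_refl v
  · exact isAncestor_parent_of_isAncestor_of_ne ((h _ _).2 (T₂.isAncestor_parent v)) h₂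

theorem parent_eq_of_isAncestor_iff {T₁ T₂ : RTree V}
    (h : ∀ a v : V, T₁.isAncestor a v ↔ T₂.isAncestor a v) : T₁.parent = T₂.parent := by
  funext v
  have h' : ∀ a v : V, T₂.isAncestor a v ↔ T₁.isAncestor a v := fun a v => (h a v).symm
  exact isAncestor_antisymm ((h _ _).2 (isAncestor_parent_parent_of_isAncestor_iff h' v))
    (isAncestor_parent_parent_of_isAncestor_iff h v)

end RTree

theorem lca_determines_tree_general {V : Type} (T₁ T₂ : RTree V)
    (lca : V → V → V)
    (h₁ : ∀ u v : V, T₁.IsLCA (lca u v) u v)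
    (h₂ : ∀ u v : V, T₂.IsLCA (lca u v) u v) :
    T₁.parent = T₂.parent :=
  RTree.parent_eq_of_isAncestor_iff fun a v => by
    rw [RTree.isAncestor_iff_lca_eq h₁, RTree.isAncestor_iff_lca_eq h₂]

/-- If two rooted trees on the same finite vertex set with the same root have
identical LCA functions, then they have the same parent function. -/
theorem lca_determines_tree {V : Type} [Fintype V] (T₁ T₂ : RTree V)
    (hroot : T₁.root = T₂.root) (lca : V → V → V)
    (h₁ : ∀ u v : V, T₁.IsLCA (lca u v) u v)
    (h₂ : ∀ u v : V, T₂.IsLCA (lca u v) u v) :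
    T₁.parent = T₂.parent :=
  lca_determines_tree_general T₁ T₂ lca h₁ h₂
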